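/- arXiv:1804.07575 — 5 statements merged into one kernel-verified Lean document; each statement's English description precedes it below -/
import Mathlib

section
/- For any natural number N ≥ 1, ∑_{k=−N}^{N} C(N,|k|)/C(N+|k|,|k|) = 2^{2N} / C(2N, N). Equivalently, 2^{−2N} · ∑_{j=0}^{2N} N!·N!/(j!·(2N−j)!) = N!·N!/(2N)!. -/
/-!
Since `C(N, a) / C(N + a, a) = N!² / ((N + a)! (N - a)!)`, the substitution `j = N + k` turns the
sum over `k` into `N!² / (2N)! · ∑ⱼ C(2N, j) = 2^(2N) N!² / (2N)!`.
-/

open Nat Finset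

theorem sum_range_div_factorial_mul_factorial {K : Type*} [Field K] [CharZero K] (n : ℕ) (c : K) :
    ∑ j ∈ range (n + 1), c / ((j ! : K) * ((n - j)! : K)) = 2 ^ n * c / (n ! : K) := by
  have hterm : ∀ j ∈ range (n + 1),
      c / ((j ! : K) * ((n - j)! : K)) = (n.choose j : K) * (c / (n ! : K)) := by
    intro j hj
    have hj' : (j ! : K) ≠ 0 := Nat.cast_ne_zero.mpr j.factorial_ne_zero
    have hnj : ((n - j)! : K) ≠ 0 := Nat.cast_ne_zero.mpr (n - j).factorial_ne_zero
    have hn : (n ! : K) ≠ 0 := Nat.cast_ne_zero.mpr n.factorial_ne_zero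
    rw [Nat.cast_choose K (Nat.lt_succ_iff.mp (mem_range.mp hj))]
    field_simp
  rw [sum_congr rfl hterm, ← sum_mul, ← Nat.cast_sum, Nat.sum_range_choose]
  push_cast
  ring

theorem choose_div_choose_add_eq_factorial {K : Type*} [Field K] [CharZero K] {n a : ℕ}
    (ha : a ≤ n) :
    (n.choose a : K) / ((n + a).choose a : K)
      = ((n ! : K) * (n ! : K)) / (((n + a)! : K) * ((n - a)! : K)) := by
  rw [Nat.cast_choose K ha, Nat.cast_choose K (Nat.le_add_left a n), Nat.add_sub_cancel]
  have : (a ! : K) ≠ 0 := Nat.cast_ne_zero.mpr a.factorial_ne_zero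
  field_simp

theorem sum_Icc_natAbs_eq_sum_range {M : Type*} [AddCommMonoid M] (n : ℕ) (g : ℕ → ℕ → M)
    (hg : ∀ a b, g a b = g b a) :
    ∑ k ∈ Icc (-(n : ℤ)) n, g (n + k.natAbs) (n - k.natAbs)
      = ∑ j ∈ range (2 * n + 1), g j (2 * n - j) := by
  apply sum_nbij' (fun k : ℤ => (k + n).toNat) (fun j : ℕ => (j : ℤ) - n)
  · intro k hk
    simp only [mem_Icc, mem_range] at hk ⊢
    omega
  · intro j hj
    simp only [mem_Icc, mem_range] at hj ⊢
    omega
  · intro k hk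
    simp only [mem_Icc] at hk
    omega
  · intro j hj
    simp only [mem_range] at hj
    omega
  · intro k hk
    simp only [mem_Icc] at hk
    rcases le_or_gt 0 k with hk0 | hk0
    · rw [show (k + n).toNat = n + k.natAbs by omega,
        show 2 * n - (n + k.natAbs) = n - k.natAbs by omega]
    · rw [show (k + n).toNat = n - k.natAbs by omega,
        show 2 * n - (n - k.natAbs) = n + k.natAbs by omega, hg]

open Nat in
theorem stmt3_general (N : ℕ) :
    (∑ k ∈ Finset.Icc (-(N:ℤ)) (N:ℤ),
        (Nat.choose N k.natAbs : ℝ) / (Nat.choose (N + k.natAbs) k.natAbs : ℝ))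
      = 2 ^ (2*N) / (Nat.choose (2*N) N : ℝ) ∧
    (2:ℝ) ^ (-(2*(N:ℤ))) * (∑ j ∈ Finset.range (2*N+1),
        ((Nat.factorial N : ℝ) * (Nat.factorial N : ℝ)) /
          ((Nat.factorial j : ℝ) * (Nat.factorial (2*N - j) : ℝ)))
      = ((Nat.factorial N : ℝ) * (Nat.factorial N : ℝ)) / (Nat.factorial (2*N) : ℝ) := by
  have hsum := sum_range_div_factorial_mul_factorial (2 * N) ((N ! : ℝ) * (N ! : ℝ))
  constructor
  · rw [sum_congr rfl fun k hk => choose_div_choose_add_eq_factorial (by simp at hk; omega),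
      sum_Icc_natAbs_eq_sum_range N (fun a b => ((N ! : ℝ) * N !) / ((a ! : ℝ) * b !))
        fun a b => by rw [mul_comm (a ! : ℝ)], hsum,
      Nat.cast_choose ℝ (by omega : N ≤ 2 * N), show 2 * N - N = N by omega]
    field_simp
  · rw [hsum, zpow_neg, show (2 * N : ℤ) = ((2 * N : ℕ) : ℤ) by push_cast; ring, zpow_natCast]
    field_simp

open Nat in
/-- The combinatorial identity from Lemma (random selection unbiased):
∑_{k=-N}^{N} C(N,|k|)/C(N+|k|,|k|) = 2^{2N}/C(2N,N), equivalently
2^{-2N} ∑_{j=0}^{2N} N!N!/(j!(2N-j)!) = N!N!/(2N)!. -/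
theorem stmt3 (N : ℕ) (hN : 1 ≤ N) :
    (∑ k ∈ Finset.Icc (-(N:ℤ)) (N:ℤ),
        (Nat.choose N k.natAbs : ℝ) / (Nat.choose (N + k.natAbs) k.natAbs : ℝ))
      = 2 ^ (2*N) / (Nat.choose (2*N) N : ℝ) ∧
    (2:ℝ) ^ (-(2*(N:ℤ))) * (∑ j ∈ Finset.range (2*N+1),
        ((Nat.factorial N : ℝ) * (Nat.factorial N : ℝ)) /
          ((Nat.factorial j : ℝ) * (Nat.factorial (2*N - j) : ℝ)))
      = ((Nat.factorial N : ℝ) * (Nat.factorial N : ℝ)) / (Nat.factorial (2*N) : ℝ) :=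
  stmt3_general N
end

section
/- Urn lemma: consider an urn with N = 2M balls, M white and M black, drawn one at a time uniformly at random without replacement until empty. If N is sufficiently large and 9·log₂ N ≤ k ≤ N/16, then the probability that there exists a contiguous window of at most 100k consecutively drawn balls containing k or fewer white balls is at most N^{−6}. -/
open Finset

/-!
Union bound over the window positions, forgetting that the sequence is balanced. A fixed window
of length `100k` has at most `∑_{j ≤ k} C(100k, j) ≤ 2^(9k)` fillings with at most `k` white balls
(compare with the binomial expansion of `(1 + 99)^(100k)`), so at most `(N + 1) 2^(N - 91k)`
sequences have a sparse window, while `C(N, N/2) ≥ 2^N / N`. As `2^k ≥ N^9`, the ratio is at most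
`(N + 1) N 2^(-91k) ≤ N^(-6)`.
-/

lemma sum_choose_mul_pow_le {n k b : ℕ} (hk : k ≤ n) (hb : 1 ≤ b) :
    (∑ j ∈ range (k + 1), n.choose j) * b ^ (n - k) ≤ (b + 1) ^ n := by
  rw [sum_mul, add_comm b 1, add_pow]
  calc ∑ j ∈ range (k + 1), n.choose j * b ^ (n - k)
      ≤ ∑ j ∈ range (k + 1), 1 ^ j * b ^ (n - j) * n.choose j :=
        sum_le_sum fun j hj => by
          rw [one_pow, one_mul, mul_comm (b ^ _)]
          exact Nat.mul_le_mul_left _ (Nat.pow_le_pow_right hb (by grind))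
    _ ≤ ∑ j ∈ range (n + 1), 1 ^ j * b ^ (n - j) * n.choose j :=
        sum_le_sum_of_subset (range_subset_range.2 (by omega))

lemma sum_choose_le_two_pow (k : ℕ) : ∑ j ∈ range (k + 1), (100 * k).choose j ≤ 2 ^ (9 * k) := by
  have h := sum_choose_mul_pow_le (n := 100 * k) (k := k) (b := 99) (by omega) le_add_self
  have h100 : (99 + 1) ^ (100 * k) ≤ 2 ^ (9 * k) * 99 ^ (100 * k - k) := by
    rw [show 100 * k - k = 99 * k by omega, pow_mul, pow_mul, pow_mul, ← mul_pow]
    gcongr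
    norm_num
  exact Nat.le_of_mul_le_mul_right (h.trans h100) (by positivity)

lemma card_filter_window {N a L : ℕ} (h : a + L ≤ N) :
    #{i : Fin N | a ≤ (i : ℕ) ∧ (i : ℕ) < a + L} = L := by
  rw [← card_map Fin.valEmbedding]
  convert Nat.card_Ico a (a + L) using 2
  · ext x
    simp only [mem_map, mem_filter, mem_univ, true_and, Fin.valEmbedding_apply, mem_Ico]
    exact ⟨fun ⟨i, hi, hix⟩ => hix ▸ hi, fun hx => ⟨⟨x, by omega⟩, hx, rfl⟩⟩
  · omega

lemma card_filter_card_filter_true_le {α : Type*} [Fintype α] [DecidableEq α] (W : Finset α)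
    (k : ℕ) :
    #{s : α → Bool | #{i ∈ W | s i = true} ≤ k}
      ≤ (∑ j ∈ range (k + 1), (#W).choose j) * 2 ^ (Fintype.card α - #W) := by
  calc #{s : α → Bool | #{i ∈ W | s i = true} ≤ k}
      ≤ #({A ∈ W.powerset | #A ≤ k} ×ˢ Wᶜ.powerset) := by
        refine card_le_card_of_injOn (fun s => ({i ∈ W | s i = true}, {i ∈ Wᶜ | s i = true}))
          (fun s hs => ?_) (fun s _ t _ hst => ?_)
        · rw [mem_coe, mem_filter] at hs
          rw [mem_coe, mem_product, mem_filter, mem_powerset, mem_powerset]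
          exact ⟨⟨filter_subset _ _, hs.2⟩, filter_subset _ _⟩
        · funext i
          have hW := Finset.ext_iff.1 (congrArg Prod.fst hst) i
          have hWc := Finset.ext_iff.1 (congrArg Prod.snd hst) i
          by_cases hi : i ∈ W <;> cases hs : s i <;> cases ht : t i <;>
            simp [hi, hs, ht] at hW hWc ⊢
    _ ≤ (∑ j ∈ range (k + 1), (#W).choose j) * 2 ^ (Fintype.card α - #W) := by
        rw [card_product, card_powerset, card_compl]
        gcongr
        calc #{A ∈ W.powerset | #A ≤ k}
            ≤ #((range (k + 1)).biUnion fun j => W.powersetCard j) :=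
              card_le_card fun A hA => by
                simp only [mem_filter, mem_powerset] at hA
                simpa [mem_powersetCard, hA.1, Nat.lt_succ_iff] using hA.2
          _ ≤ ∑ j ∈ range (k + 1), (#W).choose j :=
              card_biUnion_le.trans_eq (by simp only [card_powersetCard])

lemma pow_le_two_pow_of_mul_logb_le {x : ℝ} {n k : ℕ} (hx : 0 < x)
    (h : n * Real.logb 2 x ≤ k) : x ^ n ≤ 2 ^ k := by
  rwa [← Real.logb_le_logb one_lt_two (by positivity) (by positivity), Real.logb_pow,
    Real.logb_pow, Real.logb_self_eq_one one_lt_two, mul_one]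

open scoped Classical in
lemma card_exists_sparse_window_le (N L k : ℕ) :
    #{s : Fin N → Bool | ∃ a, a + L ≤ N ∧
        #{i : Fin N | a ≤ (i : ℕ) ∧ (i : ℕ) < a + L ∧ s i = true} ≤ k}
      ≤ (N + 1 - L) * ((∑ j ∈ range (k + 1), L.choose j) * 2 ^ (N - L)) := by
  let window (a : ℕ) : Finset (Fin N) := {i | a ≤ (i : ℕ) ∧ (i : ℕ) < a + L}
  have hwindow (a : ℕ) (s : Fin N → Bool) :
      ({i | a ≤ (i : ℕ) ∧ (i : ℕ) < a + L ∧ s i = true} : Finset (Fin N))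
        = {i ∈ window a | s i = true} := by
    simp only [window, filter_filter, and_assoc]
  let sparse (a : ℕ) : Finset (Fin N → Bool) := {s | #{i ∈ window a | s i = true} ≤ k}
  calc _ ≤ #((range (N + 1 - L)).biUnion sparse) := by
        refine card_le_card fun s hs => ?_
        obtain ⟨a, ha, hsparse⟩ := (mem_filter.1 hs).2
        exact mem_biUnion.2
          ⟨a, mem_range.2 (by omega), mem_filter.2 ⟨mem_univ _, hwindow a s ▸ hsparse⟩⟩
    _ ≤ ∑ a ∈ range (N + 1 - L), #(sparse a) := card_biUnion_le
    _ ≤ ∑ a ∈ range (N + 1 - L), (∑ j ∈ range (k + 1), L.choose j) * 2 ^ (N - L) :=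
        sum_le_sum fun a ha => by
          have hcard : #(window a) = L := card_filter_window (by grind)
          simpa only [hcard, Fintype.card_fin] using card_filter_card_filter_true_le (window a) k
    _ = _ := by rw [sum_const, card_range, smul_eq_mul]

open scoped Classical in
lemma card_balanced_sparse_window_mul_le {M k : ℕ} (hM : 1 ≤ M) (hk : (2 * M) ^ 9 ≤ 2 ^ k) :
    #{s : Fin (2 * M) → Bool | #{i | s i = true} = M ∧ ∃ a, a + 100 * k ≤ 2 * M ∧
        #{i : Fin (2 * M) | a ≤ (i : ℕ) ∧ (i : ℕ) < a + 100 * k ∧ s i = true} ≤ k}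
      * (2 * M) ^ 6 ≤ (2 * M).choose M := by
  set N := 2 * M with hN
  set bad := #{s : Fin N → Bool | #{i | s i = true} = M ∧ ∃ a, a + 100 * k ≤ N ∧
        #{i : Fin N | a ≤ (i : ℕ) ∧ (i : ℕ) < a + 100 * k ∧ s i = true} ≤ k}
  have hbad : bad ≤ (N + 1 - 100 * k) * (2 ^ (9 * k) * 2 ^ (N - 100 * k)) := by
    refine (card_le_card fun s hs => mem_filter.2 ⟨mem_univ _, (mem_filter.1 hs).2.2⟩).trans
      ((card_exists_sparse_window_le N (100 * k) k).trans ?_)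
    gcongr
    exact sum_choose_le_two_pow k
  have hC : 2 ^ N ≤ N * N.choose M := by
    rw [hN, pow_mul]
    exact Nat.four_pow_le_two_mul_self_mul_centralBinom M hM
  rcases le_or_gt (100 * k) N with hL | hL
  · have hN7 : (N + 1) * N ^ 7 ≤ 2 ^ (91 * k) :=
      calc (N + 1) * N ^ 7 ≤ N ^ 2 * N ^ 7 := Nat.mul_le_mul_right _ (by nlinarith)
        _ = N ^ 9 := by ring
        _ ≤ 2 ^ k := hk
        _ ≤ 2 ^ (91 * k) := Nat.pow_le_pow_right two_pos (by omega)
    refine Nat.le_of_mul_le_mul_right (c := N) ?_ (by omega)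
    calc bad * N ^ 6 * N ≤ (N + 1) * (2 ^ (9 * k) * 2 ^ (N - 100 * k)) * N ^ 7 := by
          rw [mul_assoc, ← pow_succ]
          gcongr
          exact hbad.trans (Nat.mul_le_mul_right _ (Nat.sub_le _ _))
      _ = (N + 1) * N ^ 7 * 2 ^ (9 * k + (N - 100 * k)) := by ring
      _ ≤ 2 ^ (91 * k) * 2 ^ (9 * k + (N - 100 * k)) := by gcongr
      _ = 2 ^ N := by rw [← pow_add]; congr 1; omega
      _ ≤ N.choose M * N := by rw [mul_comm]; exact hC
  · have : bad = 0 := by simpa [show N + 1 - 100 * k = 0 by omega] using hbad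
    simp [this]

open scoped Classical in
/-- Urn lemma: for a uniformly random arrangement of M white and M black balls
(N = 2M, N sufficiently large) and 9 log₂ N ≤ k ≤ N/16, the probability that some
contiguous window of 100k drawn balls contains k or fewer white balls is at most N^{-6}.
The probability is the ratio of the number of balanced sequences with such a window to
the total number C(2M, M) of balanced sequences. -/
theorem stmt7 : ∃ N₀ : ℕ, ∀ M k : ℕ, N₀ ≤ 2*M →
    9 * Real.logb 2 (2*M) ≤ (k:ℝ) → (k:ℝ) ≤ (2*M : ℝ)/16 →
    (((Finset.univ.filter (fun s : Fin (2*M) → Bool =>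
        (Finset.univ.filter (fun i => s i = true)).card = M ∧
        ∃ a : ℕ, a + 100*k ≤ 2*M ∧
          (Finset.univ.filter
            (fun i : Fin (2*M) => a ≤ (i:ℕ) ∧ (i:ℕ) < a + 100*k ∧ s i = true)).card ≤ k)).card
        : ℝ) / (Nat.choose (2*M) M : ℝ))
      ≤ ((2*M : ℝ))^(-(6:ℤ)) := by
  refine ⟨2, fun M k hM hlog _ => ?_⟩
  have hN : (0 : ℝ) < 2 * M := by exact_mod_cast (by omega : 0 < 2 * M)
  have hpow : (2 * M) ^ 9 ≤ 2 ^ k := by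
    exact_mod_cast pow_le_two_pow_of_mul_logb_le hN (by exact_mod_cast hlog)
  have hcount := card_balanced_sparse_window_mul_le (by omega) hpow
  have hC : (0 : ℝ) < (2 * M).choose M := by exact_mod_cast Nat.choose_pos (by omega)
  rw [div_le_iff₀ hC, zpow_neg, inv_mul_eq_div, le_div_iff₀ (by positivity)]
  exact_mod_cast hcount
end

section
/- Test on a bad vertex succeeds with probability at most p: if S has maximum dislocation at most d, x has true rank i*, and either L ≥ i* + d or R ≤ i* − d − 1 for the two tested positions L and R, and each comparison errs independently with probability p, then the probability of observing both s_L < x and x < s_R is at most p. -/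
/-!
If `L ≥ i* + d`, then bounded dislocation puts at least `i*` elements of `S` below `s_L`, so
`s_L > x` and the observation `s_L < x` is an error of the left comparison. Symmetrically, if
`R ≤ i* - d - 1`, then `s_R < x` and observing `x < s_R` is an error of the right comparison.
Either way the success event is contained in an error event of probability `p`.
-/

open Finset MeasureTheory

section Rank

variable {ι α : Type*} [LinearOrder α] (s : Finset ι) (f : ι → α)

theorem card_filter_lt_mono {a b : α} (hab : a ≤ b) :
    #(s.filter (f · < a)) ≤ #(s.filter (f · < b)) :=
  card_le_card <| monotone_filter_right s fun _ _ h => h.trans_le hab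

theorem card_filter_lt_apply_lt {i : ι} (hi : i ∈ s) {b : α} (hib : f i < b) :
    #(s.filter (f · < f i)) < #(s.filter (f · < b)) := by
  refine card_lt_card ⟨monotone_filter_right s fun _ _ h => h.trans hib, fun hsub => ?_⟩
  exact lt_irrefl (f i) (mem_filter.mp (hsub (mem_filter.mpr ⟨hi, hib⟩))).2

end Rank

section Dislocation

variable {α : Type*} [LinearOrder α] {n : ℕ} (S : Fin n → α) (d : ℕ) (x : α) (i : Fin n)
  (hdisl : |(i : ℤ) - (#(univ.filter (fun j => S j < S i)) : ℤ)| ≤ (d : ℤ))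
include hdisl

theorem not_lt_of_rank_add_le (h : (#(univ.filter (fun j => S j < x)) : ℤ) + d ≤ i) :
    ¬ S i < x := fun hix => by
  have := card_filter_lt_apply_lt univ S (mem_univ i) hix
  rw [abs_le] at hdisl
  omega

theorem not_lt_of_le_rank_sub (h : (i : ℤ) ≤ #(univ.filter (fun j => S j < x)) - d - 1) :
    ¬ x < S i := fun hxi => by
  have := card_filter_lt_mono univ S hxi.le
  rw [abs_le] at hdisl
  omega

end Dislocation

theorem measure_le_measure_obs_ne_of_not {Ω : Type*} [MeasurableSpace Ω] (μ : Measure Ω)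
    (obs : Ω → Bool) {P : Prop} [Decidable P] (hP : ¬P) {s : Set Ω}
    (hs : s ⊆ {ω | obs ω = true}) : μ s ≤ μ {ω | obs ω ≠ decide P} :=
  measure_mono fun ω hω => by simp [hs hω, hP]

open MeasureTheory in
theorem stmt11_general {α : Type*} [LinearOrder α] {n : ℕ} (S : Fin n → α)
    (d : ℕ)
    (hdisl : ∀ i : Fin n,
      |(i : ℤ) - ((Finset.univ.filter (fun j => S j < S i)).card : ℤ)| ≤ (d : ℤ))
    (x : α)
    (istar : ℕ) (histar : istar = (Finset.univ.filter (fun j => S j < x)).card)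
    (L R : Fin n)
    (hbad : (istar : ℤ) + d ≤ (L : ℤ) ∨ (R : ℤ) ≤ (istar : ℤ) - d - 1)
    {Ω : Type*} [MeasurableSpace Ω] (μ : Measure Ω)
    (p : ℝ)
    (obsL obsR : Ω → Bool)
    (herrL : μ {ω | obsL ω ≠ decide (S L < x)} = ENNReal.ofReal p)
    (herrR : μ {ω | obsR ω ≠ decide (x < S R)} = ENNReal.ofReal p) :
    μ {ω | obsL ω = true ∧ obsR ω = true} ≤ ENNReal.ofReal p := by
  subst histar
  rcases hbad with hL | hR
  · have hLx := not_lt_of_rank_add_le S d x L (hdisl L) hL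
    exact (measure_le_measure_obs_ne_of_not μ obsL hLx fun _ h => h.1).trans herrL.le
  · have hxR := not_lt_of_le_rank_sub S d x R (hdisl R) hR
    exact (measure_le_measure_obs_ne_of_not μ obsR hxR fun _ h => h.2).trans herrR.le

open MeasureTheory in
/-- A test on a bad vertex succeeds with probability at most p: if either L ≥ i* + d or
R ≤ i* - d - 1, and each comparison errs independently with probability p, then the
probability of observing both s_L < x and x < s_R is at most p. -/
theorem stmt11 {α : Type*} [LinearOrder α] {n : ℕ} (S : Fin n → α)
    (hinj : Function.Injective S) (d : ℕ)
    (hdisl : ∀ i : Fin n,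
      |(i : ℤ) - ((Finset.univ.filter (fun j => S j < S i)).card : ℤ)| ≤ (d : ℤ))
    (x : α) (hx : ∀ i, S i ≠ x)
    (istar : ℕ) (histar : istar = (Finset.univ.filter (fun j => S j < x)).card)
    (L R : Fin n)
    (hbad : (istar : ℤ) + d ≤ (L : ℤ) ∨ (R : ℤ) ≤ (istar : ℤ) - d - 1)
    {Ω : Type*} [MeasurableSpace Ω] (μ : Measure Ω) [IsProbabilityMeasure μ]
    (p : ℝ) (hp0 : 0 ≤ p) (hp : p < 1/2)
    (obsL obsR : Ω → Bool)
    (herrL : μ {ω | obsL ω ≠ decide (S L < x)} = ENNReal.ofReal p)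
    (herrR : μ {ω | obsR ω ≠ decide (x < S R)} = ENNReal.ofReal p) :
    μ {ω | obsL ω = true ∧ obsR ω = true} ≤ ENNReal.ofReal p :=
  stmt11_general S d hdisl x istar histar L R hbad μ p obsL obsR herrL herrR
end

section
/- In one round of WindowSort with window size w, where each element x_i at position i receives score_w(x_i) = max{0, i−w} + |{x_j : |j−i| ≤ w, x_j < x_i observed}|, and elements are re-sorted by score: every element moves by at most 2w positions, i.e., |pos(x, S_w) − pos(x, S_{w/2})| ≤ 2w for all x. -/
/-!
Every score lies within `w` of its position: it is at least the truncated `i - w`, and the count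
adds at most `(i + w) - (i - w)`, the number of other positions of the window. Hence, if the element of
position `i` lands at position `a` after sorting, the `a + 1` elements sorted no later than it have
scores at most `i + w`, so they come from positions at most `i + 2w`, giving `a ≤ i + 2w`; the
bound `i ≤ a + 2w` is symmetric, counting the elements sorted no earlier.
-/

open Finset

namespace Fin

variable {n : ℕ}

theorem le_of_injective_of_forall_le {f : Fin n → ℕ} (hf : Function.Injective f) {a : Fin n}
    {m : ℕ} (h : ∀ b ≤ a, f b ≤ m) : (a : ℕ) ≤ m := by
  have hcard : #(Iic a) ≤ #(range (m + 1)) :=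
    card_le_card_of_injOn f (fun b hb => by simpa [Nat.lt_succ_iff] using h b (by simpa using hb))
      hf.injOn
  rw [card_Iic, card_range] at hcard
  omega

theorem le_of_injective_of_forall_ge {f : Fin n → Fin n} (hf : Function.Injective f)
    {a : Fin n} {m : ℕ} (h : ∀ b ≥ a, m ≤ f b) : m ≤ (a : ℕ) := by
  have hcard : #(Ici a) ≤ #(Ico m n) :=
    card_le_card_of_injOn (fun b => (f b : ℕ))
      (fun b hb => mem_Ico.2 ⟨h b (by simpa using hb), (f b).isLt⟩)
      (Fin.val_injective.comp hf).injOn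
  rw [card_Ici, Nat.card_Ico] at hcard
  have := h a le_rfl
  omega

theorem abs_symm_sub_le_of_monotone {w : ℕ} {s : Fin n → ℕ} {π : Equiv.Perm (Fin n)}
    (hπ : Monotone (s ∘ π)) (hlow : ∀ j : Fin n, (j : ℕ) ≤ s j + w)
    (hupp : ∀ j : Fin n, s j ≤ j + w) (i : Fin n) :
    |((π.symm i : ℕ) : ℤ) - (i : ℤ)| ≤ 2 * w := by
  have hi : π (π.symm i) = i := π.apply_symm_apply i
  have hleft : (π.symm i : ℕ) ≤ i + 2 * w :=
    le_of_injective_of_forall_le (Fin.val_injective.comp π.injective) fun b hb => by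
      have := hπ hb
      simp only [Function.comp_apply, hi] at this
      have := hlow (π b); have := hupp i
      simp only [Function.comp_apply]
      omega
  have hright : (i : ℕ) - 2 * w ≤ π.symm i :=
    le_of_injective_of_forall_ge π.injective fun b hb => by
      have := hπ hb
      simp only [Function.comp_apply, hi] at this
      have := hupp (π b); have := hlow i
      omega
  rw [abs_le]
  constructor <;> omega

theorem sub_add_card_le_of_subset_window {w : ℕ} {i : Fin n} {t : Finset (Fin n)}
    (ht : ∀ j ∈ t, j ≠ i ∧ (i : ℤ) - w ≤ (j : ℤ) ∧ (j : ℤ) ≤ (i : ℤ) + w) :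
    ((i : ℕ) - w) + #t ≤ i + w := by
  have hcard : #t ≤ #((Icc ((i : ℕ) - w) (i + w)).erase i) :=
    card_le_card_of_injOn (fun j => (j : ℕ))
      (fun j hj => by
        obtain ⟨hne, h₁, h₂⟩ := ht j hj
        simp only [coe_erase, coe_Icc, Set.mem_sdiff, Set.mem_Icc, Set.mem_singleton_iff]
        exact ⟨⟨by omega, by omega⟩, Fin.val_injective.ne hne⟩)
      Fin.val_injective.injOn
  rw [card_erase_of_mem (by simp only [mem_Icc]; omega), Nat.card_Icc] at hcard
  omega

end Fin

open scoped Classical in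
/-- One round of WindowSort with window size w: element x_i at position i gets score
max{0, i-w} plus the number of elements x_j with |j-i| ≤ w (j ≠ i) observed smaller than
x_i; re-sorting by non-decreasing score (π maps new positions to old positions) moves every
element by at most 2w positions. -/
theorem stmt15 {α : Type*} {n : ℕ} (w : ℕ) (x : Fin n → α)
    (obs : α → α → Bool)
    (score : Fin n → ℕ)
    (hscore : ∀ i : Fin n, score i = ((i:ℕ) - w) +
      (Finset.univ.filter (fun j : Fin n =>
        j ≠ i ∧ (i:ℤ) - w ≤ (j:ℤ) ∧ (j:ℤ) ≤ (i:ℤ) + w ∧ obs (x j) (x i) = true)).card)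
    (π : Equiv.Perm (Fin n))
    (hsorted : ∀ a b : Fin n, a ≤ b → score (π a) ≤ score (π b)) :
    ∀ i : Fin n, |((π.symm i : ℕ) : ℤ) - (i : ℤ)| ≤ 2 * w := by
  refine Fin.abs_symm_sub_le_of_monotone (s := score) hsorted (fun j => ?_) (fun j => ?_)
  · rw [hscore j]
    omega
  · rw [hscore j]
    exact Fin.sub_add_card_le_of_subset_window fun k hk => by
      obtain ⟨hne, h₁, h₂, -⟩ := (mem_filter.1 hk).2
      exact ⟨hne, h₁, h₂⟩
end

section
/- Lower bound via reduction: if there exists a comparison-based algorithm that, given n elements, produces in T(n) time a sequence with maximum dislocation at most d = O(log n) even without comparison errors, then n elements can be exactly sorted in T(n) + O(n log log n) comparisons; hence, by the Ω(n log n) comparison-sorting lower bound, T(n) = Ω(n log n). The reduction: repeatedly sort the first m = 2·max{d, log n} elements of the approximate sequence exactly (the smallest m/2 of them are the overall smallest remaining elements), remove them, and repeat n/m times, costing O((n/m)·m log m) = O(n log log n) extra comparisons. -/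
/-- A comparison-based algorithm, modeled as a binary decision tree: internal nodes query
the comparison of two elements (indices in Fin n), leaves output, for each element, the
position it is placed at. -/
inductive CompTree (n : ℕ) : Type
  | leaf (out : Fin n → ℤ) : CompTree n
  | node (i j : Fin n) (l r : CompTree n) : CompTree n

/-- The depth of a decision tree (worst-case number of comparisons). -/
def CompTree.depth {n : ℕ} : CompTree n → ℕ
  | .leaf _ => 0
  | .node _ _ l r => max l.depth r.depth + 1

/-- Running a decision tree on an input whose true order is given by the ranking
permutation σ (σ i is the rank of element i): each comparison is answered correctly
(no errors). -/
def CompTree.run {n : ℕ} (σ : Equiv.Perm (Fin n)) : CompTree n → (Fin n → ℤ)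
  | .leaf out => out
  | .node i j l r => if σ i < σ j then l.run σ else r.run σ

/-!
Rather than through the reduction to exact sorting, the bound follows from the same counting
argument: a tree of depth `D` has at most `2 ^ D` outputs, and a fixed output is within
dislocation `d` of at most `(2d+1)^n` rankings, so `n! ≤ (2d+1)^n 2^D`. With `n^n ≤ n! e^n`
this gives `D ≥ n log₂ n - n log₂ (e (2d+1))`, and for `d ≤ C log₂ n` the subtracted term is
eventually at most `(n/2) log₂ n`.
-/

open Real Filter Asymptotics
open scoped Nat

namespace CompTree

variable {n : ℕ}

def outputs : CompTree n → Finset (Fin n → ℤ)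
  | .leaf out => {out}
  | .node _ _ l r => l.outputs ∪ r.outputs

theorem card_outputs_le (t : CompTree n) : t.outputs.card ≤ 2 ^ t.depth := by
  induction t with
  | leaf out => simp [outputs, depth]
  | node i j l r hl hr =>
    calc (l.outputs ∪ r.outputs).card ≤ l.outputs.card + r.outputs.card :=
          Finset.card_union_le _ _
      _ ≤ 2 ^ max l.depth r.depth + 2 ^ max l.depth r.depth := by
          gcongr
          · exact hl.trans (Nat.pow_le_pow_right two_pos (le_max_left _ _))
          · exact hr.trans (Nat.pow_le_pow_right two_pos (le_max_right _ _))
      _ = 2 ^ (max l.depth r.depth + 1) := by ring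

theorem run_mem_outputs (t : CompTree n) (σ : Equiv.Perm (Fin n)) : t.run σ ∈ t.outputs := by
  induction t with
  | leaf out => simp [outputs, run]
  | node i j l r hl hr =>
    simp only [run, outputs, Finset.mem_union]
    split_ifs
    exacts [Or.inl hl, Or.inr hr]

end CompTree

theorem card_filter_abs_sub_le (n d : ℕ) (a : ℤ) :
    (Finset.univ.filter fun k : Fin n => |a - ((k : ℕ) : ℤ)| ≤ d).card ≤ 2 * d + 1 := by
  have hinj : (Finset.univ.filter fun k : Fin n => |a - ((k : ℕ) : ℤ)| ≤ d).card ≤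
      (Finset.Icc (a - d) (a + d)).card :=
    Finset.card_le_card_of_injOn (fun k : Fin n => ((k : ℕ) : ℤ))
      (fun k hk => by
        rw [Finset.mem_coe, Finset.mem_filter, abs_le] at hk
        rw [Finset.mem_coe, Finset.mem_Icc]
        dsimp only
        omega)
      (fun k _ k' _ h => Fin.ext (Nat.cast_injective h))
  rw [Int.card_Icc] at hinj
  omega

theorem card_perm_dislocation_le (n d : ℕ) (out : Fin n → ℤ) :
    (Finset.univ.filter fun σ : Equiv.Perm (Fin n) =>
      ∀ i, |out i - ((σ i : ℕ) : ℤ)| ≤ d).card ≤ (2 * d + 1) ^ n := by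
  set ranks : Fin n → Finset (Fin n) :=
    fun i => Finset.univ.filter fun k : Fin n => |out i - ((k : ℕ) : ℤ)| ≤ d
  calc _ ≤ (Fintype.piFinset ranks).card :=
        Finset.card_le_card_of_injOn (fun σ : Equiv.Perm (Fin n) => ⇑σ)
          (fun σ hσ => by
            rw [Finset.mem_coe, Finset.mem_filter] at hσ
            simpa [ranks] using hσ.2)
          (fun σ _ τ _ h => Equiv.coe_fn_injective h)
    _ = ∏ i, (ranks i).card := Fintype.card_piFinset ranks
    _ ≤ ∏ _i : Fin n, (2 * d + 1) :=
        Finset.prod_le_prod' fun i _ => card_filter_abs_sub_le n d (out i)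
    _ = (2 * d + 1) ^ n := by simp

namespace CompTree

variable {n d : ℕ}

theorem factorial_le_of_dislocation_le (t : CompTree n)
    (ht : ∀ σ : Equiv.Perm (Fin n), ∀ i, |t.run σ i - ((σ i : ℕ) : ℤ)| ≤ d) :
    n ! ≤ (2 * d + 1) ^ n * 2 ^ t.depth := by
  calc n ! = (Finset.univ : Finset (Equiv.Perm (Fin n))).card := by
        rw [Finset.card_univ, Fintype.card_perm, Fintype.card_fin]
    _ ≤ (2 * d + 1) ^ n * t.outputs.card :=
        Finset.card_le_mul_card_image_of_maps_to (fun σ _ => t.run_mem_outputs σ) _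
          fun out _ => (Finset.card_le_card fun σ hσ => by
            simp only [Finset.mem_filter, Finset.mem_univ, true_and] at hσ ⊢
            exact hσ ▸ ht σ).trans (card_perm_dislocation_le n d out)
    _ ≤ (2 * d + 1) ^ n * 2 ^ t.depth := by gcongr; exact t.card_outputs_le

theorem mul_logb_le_depth (t : CompTree n)
    (ht : ∀ σ : Equiv.Perm (Fin n), ∀ i, |t.run σ i - ((σ i : ℕ) : ℤ)| ≤ d) :
    n * logb 2 n ≤ n * logb 2 (exp 1 * (2 * d + 1)) + t.depth := by
  obtain rfl | hn := n.eq_zero_or_pos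
  · simp
  have hcount : ((n ! : ℕ) : ℝ) ≤ ((2 * d + 1 : ℝ)) ^ n * 2 ^ t.depth := by
    exact_mod_cast t.factorial_le_of_dislocation_le ht
  have hexp : (n : ℝ) ^ n ≤ n ! * exp 1 ^ n := by
    rw [← exp_nat_mul, mul_one, ← div_le_iff₀' (by positivity)]
    exact pow_div_factorial_le_exp _ n.cast_nonneg n
  have hpow : (n : ℝ) ^ n ≤ (exp 1 * (2 * d + 1)) ^ n * 2 ^ t.depth := by
    calc (n : ℝ) ^ n ≤ n ! * exp 1 ^ n := hexp
      _ ≤ (2 * d + 1) ^ n * 2 ^ t.depth * exp 1 ^ n := by gcongr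
      _ = (exp 1 * (2 * d + 1)) ^ n * 2 ^ t.depth := by rw [mul_pow]; ring
  have := logb_le_logb_of_le one_lt_two (by positivity) hpow
  rwa [logb_mul (by positivity) (by positivity), logb_pow, logb_pow, logb_pow,
    logb_self_eq_one one_lt_two, mul_one] at this

end CompTree

theorem eventually_mul_logb_add_le_rpow_half (a b : ℝ) :
    ∀ᶠ x : ℝ in atTop, a * logb 2 x + b ≤ x ^ (1 / 2 : ℝ) := by
  have hlog : (fun x => a * logb 2 x) =o[atTop] fun x : ℝ => x ^ (1 / 2 : ℝ) :=
    ((isLittleO_log_rpow_atTop (by norm_num)).const_mul_left (a / log 2)).congr_left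
      fun x => by rw [logb]; ring
  have hconst : (fun _ => b) =o[atTop] fun x : ℝ => x ^ (1 / 2 : ℝ) :=
    isLittleO_const_left.2 <| Or.inr <|
      tendsto_norm_atTop_atTop.comp (tendsto_rpow_atTop (by norm_num))
  filter_upwards [(hlog.add hconst).eventuallyLE, eventually_ge_atTop 0] with x hx hx0
  calc a * logb 2 x + b ≤ ‖a * logb 2 x + b‖ := le_abs_self _
    _ ≤ ‖x ^ (1 / 2 : ℝ)‖ := hx
    _ = x ^ (1 / 2 : ℝ) := norm_of_nonneg (by positivity)

/-- Lower bound: any error-free comparison-based algorithm that on every input produces a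
sequence with maximum dislocation at most d = O(log n) must use Ω(n log n) comparisons. -/
theorem stmt18 : ∀ C : ℝ, 0 < C → ∃ c : ℝ, 0 < c ∧ ∃ N₀ : ℕ, ∀ n : ℕ, N₀ ≤ n →
    ∀ d : ℕ, (d : ℝ) ≤ C * Real.logb 2 n →
    ∀ t : CompTree n,
      (∀ σ : Equiv.Perm (Fin n), ∀ i : Fin n, |t.run σ i - ((σ i : ℕ) : ℤ)| ≤ (d : ℤ)) →
      c * n * Real.logb 2 n ≤ (t.depth : ℝ) := by
  intro C _
  obtain ⟨N₀, hN₀⟩ := eventually_atTop.1 <| tendsto_natCast_atTop_atTop.eventually <|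
    (eventually_mul_logb_add_le_rpow_half (2 * exp 1 * C) (exp 1)).and (eventually_gt_atTop 0)
  refine ⟨1 / 2, by norm_num, N₀, fun n hn d hd t ht => ?_⟩
  obtain ⟨hsmall, hn0⟩ := hN₀ n hn
  have hslack : exp 1 * (2 * d + 1) ≤ (n : ℝ) ^ (1 / 2 : ℝ) := by
    nlinarith [exp_pos 1]
  have hlog : logb 2 (exp 1 * (2 * d + 1)) ≤ logb 2 n / 2 := by
    have := logb_le_logb_of_le one_lt_two (by positivity) hslack
    rwa [logb_rpow_eq_mul_logb_of_pos hn0, one_div, inv_mul_eq_div] at this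
  nlinarith [t.mul_logb_le_depth ht]
end
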